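/- arXiv:1610.00951 — 3 statements merged into one kernel-verified Lean document; each statement's English description precedes it below -/
import Mathlib

section
/- Let $\mathscr{K}$ be a positive self-adjoint trace-class operator on $\mathcal{H}$ with eigenvalues $\lambda_j$ satisfying $c j^{-\alpha} \le \lambda_j \le C j^{-\alpha}$ for all large $j$ with $\alpha > 1$, and let $\beta \in \mathcal{H}$ satisfy $|\langle\beta,\phi_j\rangle| \le d j^{-\eta}$ for all large $j$ with $\eta > 1/2$. Then as $\rho \downarrow 0$, the squared Tikhonov bias satisfies $\rho^2 \sum_{j\ge1} (\lambda_j+\rho)^{-2}\langle\beta,\phi_j\rangle^2 = O(\rho^m)$, where $m = (2\eta-1)/\alpha$ if $\alpha > \eta - 1/2$ and $m = 2$ if $\alpha < \eta - 1/2$. -/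
/-!
Write the summand as `(ρ / (λⱼ + ρ))² bⱼ²`. The Tikhonov factor `ρ / (λ + ρ)` is at most `1` and
at most `ρ / λ`; after enlarging the constants to cover the finitely many small indices, the
`j`-th term is therefore at most `min (A ρ² j^(2α-2η)) (D j^(-2η))`. If `2α - 2η < -1` the first
bound alone is summable and gives `O(ρ²)`. Otherwise split the series at `J ≈ ρ^(-1/α)`, where
the two bounds cross: the head is `≲ ρ² J^(2α-2η+1)` and the tail `≲ J^(1-2η)`, both of order
`ρ^((2η-1)/α)`.
-/

open Filter Asymptotics Finset

theorem exists_forall_abs_le_mul_of_eventually {f g : ℕ → ℝ} {C : ℝ} (hg : ∀ n, 0 < g n)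
    (h : ∀ᶠ n in atTop, |f n| ≤ C * g n) : ∃ C', ∀ n, |f n| ≤ C' * g n := by
  have hfg : f =O[cofinite] g := by
    rw [Nat.cofinite_eq_atTop]
    refine IsBigO.of_bound C (h.mono fun n hn => ?_)
    rwa [Real.norm_eq_abs, Real.norm_of_nonneg (hg n).le]
  obtain ⟨C', hC'⟩ := (isBigO_cofinite_iff fun n hn => absurd hn (hg n).ne').1 hfg
  exact ⟨C', fun n => by simpa [abs_of_pos (hg n)] using hC' n⟩

theorem exists_sq_le_mul_rpow_of_eventually {f : ℕ → ℝ} {C p : ℝ}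
    (h : ∀ᶠ j in atTop, |f j| ≤ C * (j : ℝ) ^ p) :
    ∃ A ≥ 0, ∀ j : ℕ, f (j + 1) ^ 2 ≤ A * ((j : ℝ) + 1) ^ (2 * p) := by
  obtain ⟨C', hC'⟩ := exists_forall_abs_le_mul_of_eventually (f := fun j => f (j + 1))
    (fun j => Real.rpow_pos_of_pos (Nat.cast_add_one_pos j) p)
    (((tendsto_add_atTop_nat 1).eventually h).mono fun j hj => by push_cast at hj; exact hj)
  refine ⟨C' ^ 2, sq_nonneg _, fun j => ?_⟩
  calc f (j + 1) ^ 2 = |f (j + 1)| ^ 2 := (sq_abs _).symm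
    _ ≤ (C' * ((j : ℝ) + 1) ^ p) ^ 2 := pow_le_pow_left₀ (abs_nonneg _) (hC' j) 2
    _ = C' ^ 2 * ((j : ℝ) + 1) ^ (2 * p) := by
        rw [mul_pow, ← Real.rpow_mul_natCast (Nat.cast_add_one_pos j).le, mul_comm p]
        norm_num

theorem eventually_abs_inv_le_of_mul_rpow_neg_le {lam : ℕ → ℝ} {c α : ℝ} (hc : 0 < c)
    (h : ∃ N : ℕ, ∀ j, N ≤ j → c * (j : ℝ) ^ (-α) ≤ lam j) :
    ∀ᶠ j in atTop, |(lam j)⁻¹| ≤ c⁻¹ * (j : ℝ) ^ α := by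
  obtain ⟨N, hN⟩ := h
  refine eventually_atTop.2 ⟨max N 1, fun j hj => ?_⟩
  have hlow := hN j (le_of_max_le_left hj)
  have hj : (0 : ℝ) < j := by exact_mod_cast le_of_max_le_right hj
  have hlow_pos : 0 < c * (j : ℝ) ^ (-α) := by positivity
  rw [abs_of_pos (inv_pos.2 (hlow_pos.trans_le hlow))]
  calc (lam j)⁻¹ ≤ (c * (j : ℝ) ^ (-α))⁻¹ := inv_anti₀ hlow_pos hlow
    _ = c⁻¹ * (j : ℝ) ^ α := by rw [mul_inv, Real.rpow_neg hj.le, inv_inv]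

theorem tikhonov_bias_term_le {l b ρ a c x α η : ℝ} (hl : 0 < l) (hρ : 0 < ρ) (hx : 0 < x)
    (hla : (l⁻¹) ^ 2 ≤ a * x ^ (2 * α)) (hbc : b ^ 2 ≤ c * x ^ (2 * -η)) (ha : 0 ≤ a) :
    ((l + ρ)⁻¹) ^ 2 * b ^ 2 ≤ a * c * x ^ (2 * α - 2 * η) ∧
      ρ ^ 2 * (((l + ρ)⁻¹) ^ 2 * b ^ 2) ≤ c * x ^ (-(2 * η)) := by
  constructor
  · calc ((l + ρ)⁻¹) ^ 2 * b ^ 2 ≤ (l⁻¹) ^ 2 * b ^ 2 := by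
          gcongr
          linarith
      _ ≤ (a * x ^ (2 * α)) * (c * x ^ (2 * -η)) :=
          mul_le_mul hla hbc (sq_nonneg _) (by positivity)
      _ = a * c * x ^ (2 * α - 2 * η) := by
          rw [sub_eq_add_neg, ← mul_neg, Real.rpow_add hx]
          ring
  · have hfactor : ρ * (l + ρ)⁻¹ ≤ 1 := by
      rw [← div_eq_mul_inv]
      exact div_le_one_of_le₀ (by linarith) (by positivity)
    calc ρ ^ 2 * (((l + ρ)⁻¹) ^ 2 * b ^ 2) = (ρ * (l + ρ)⁻¹) ^ 2 * b ^ 2 := by ring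
      _ ≤ b ^ 2 := mul_le_of_le_one_left (sq_nonneg _) (pow_le_one₀ (by positivity) hfactor)
      _ ≤ c * x ^ (-(2 * η)) := by rwa [← mul_neg]

theorem summable_rpow_succ {p : ℝ} (hp : p < -1) : Summable fun j : ℕ => ((j : ℝ) + 1) ^ p :=
  (summable_nat_add_iff 1).2 (Real.summable_nat_rpow.2 hp) |>.congr fun j => by push_cast; rfl

theorem rpow_succ_le_integral {s : ℝ} (hs : -1 < s) (hs0 : s ≤ 0) {x : ℝ} (hx : 0 ≤ x) :
    (x + 1) ^ s ≤ ∫ t in x..x + 1, t ^ s := by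
  calc (x + 1) ^ s = ∫ _ in x..x + 1, (x + 1) ^ s := by simp
    _ ≤ ∫ t in x..x + 1, t ^ s :=
      intervalIntegral.integral_mono_on_of_le_Ioo (by linarith) intervalIntegrable_const
        (intervalIntegral.intervalIntegrable_rpow' hs) fun t ht =>
          Real.rpow_le_rpow_of_nonpos (by linarith [ht.1]) ht.2.le hs0

theorem sum_range_rpow_succ_le {s : ℝ} (hs : -1 < s) (J : ℕ) :
    ∑ i ∈ range J, ((i : ℝ) + 1) ^ s ≤ max 1 (s + 1)⁻¹ * (J : ℝ) ^ (s + 1) := by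
  rcases le_or_gt 0 s with hs0 | hs0
  · calc ∑ i ∈ range J, ((i : ℝ) + 1) ^ s ≤ ∑ _i ∈ range J, (J : ℝ) ^ s :=
          sum_le_sum fun i hi => Real.rpow_le_rpow (by positivity)
            (by exact_mod_cast Nat.succ_le_of_lt (mem_range.1 hi)) hs0
      _ = (J : ℝ) ^ (s + 1) := by
          rw [sum_const, card_range, nsmul_eq_mul, Real.rpow_add_one' (by positivity) (by linarith)]
          ring
      _ ≤ max 1 (s + 1)⁻¹ * (J : ℝ) ^ (s + 1) :=
          le_mul_of_one_le_left (by positivity) (le_max_left _ _)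
  · calc ∑ i ∈ range J, ((i : ℝ) + 1) ^ s
          ≤ ∑ i ∈ range J, ∫ t in (i : ℝ)..((i + 1 : ℕ) : ℝ), t ^ s :=
          sum_le_sum fun i _ => by
            push_cast
            exact rpow_succ_le_integral hs hs0.le (Nat.cast_nonneg i)
      _ = (s + 1)⁻¹ * (J : ℝ) ^ (s + 1) := by
          rw [intervalIntegral.sum_integral_adjacent_intervals fun k _ =>
            intervalIntegral.intervalIntegrable_rpow' hs, integral_rpow (Or.inl hs),
            Nat.cast_zero, Real.zero_rpow (by linarith)]
          ring
      _ ≤ max 1 (s + 1)⁻¹ * (J : ℝ) ^ (s + 1) :=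
          mul_le_mul_of_nonneg_right (le_max_right _ _) (by positivity)

theorem tsum_rpow_succ_nat_add_le {q : ℝ} (hq : 1 < q) {J : ℕ} (hJ : 0 < J) :
    ∑' j, (((j + J : ℕ) : ℝ) + 1) ^ (-q) ≤ (q - 1)⁻¹ * (J : ℝ) ^ (1 - q) := by
  have hJ' : (0 : ℝ) < J := by exact_mod_cast hJ
  calc ∑' j, (((j + J : ℕ) : ℝ) + 1) ^ (-q) = ∑' j, (((j + J + 1 : ℕ) : ℝ)) ^ (-q) := by
        push_cast; rfl
    _ ≤ ∫ t in Set.Ioi (J : ℝ), t ^ (-q) :=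
        AntitoneOn.tsum_comp_add_le_integral J
          (fun x hx y _ hxy => Real.rpow_le_rpow_of_nonpos (hJ'.trans_le hx) hxy (by linarith))
          (integrableOn_Ioi_rpow_of_lt (by linarith) hJ')
          fun t ht => (Real.rpow_pos_of_pos (hJ'.trans ht) _).le
    _ = (q - 1)⁻¹ * (J : ℝ) ^ (1 - q) := by
        rw [integral_Ioi_rpow_of_lt (by linarith) hJ', neg_add_eq_sub, neg_div, ← div_neg,
          neg_sub, div_eq_inv_mul]

theorem exists_tsum_le_mul_rpow_of_le_of_le {α q A D : ℝ} (hs : -1 < 2 * α - q) (hq : 1 < q)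
    (hA : 0 ≤ A) (hD : 0 ≤ D) :
    ∃ K, ∀ ρ : ℝ, 0 < ρ → ρ ≤ 1 → ∀ u : ℕ → ℝ, (∀ j, 0 ≤ u j) →
      (∀ j, u j ≤ A * ρ ^ 2 * ((j : ℝ) + 1) ^ (2 * α - q)) →
      (∀ j, u j ≤ D * ((j : ℝ) + 1) ^ (-q)) →
      ∑' j, u j ≤ K * ρ ^ ((q - 1) / α) := by
  set s := 2 * α - q
  have hα : 0 < α := by linarith
  refine ⟨A * max 1 (s + 1)⁻¹ * 2 ^ (s + 1) + D * (q - 1)⁻¹,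
    fun ρ hρ hρ1 u hu hhead htail => ?_⟩
  set r := ρ ^ (-α⁻¹) with hr
  have hr1 : 1 ≤ r :=
    Real.one_le_rpow_of_pos_of_le_one_of_nonpos hρ hρ1 (neg_nonpos.2 (inv_nonneg.2 hα.le))
  have hρr : ρ = r ^ (-α) := by
    rw [hr, ← Real.rpow_mul hρ.le, neg_mul_neg, inv_mul_cancel₀ hα.ne', Real.rpow_one]
  set J := ⌈r⌉₊
  have hrJ : r ≤ J := Nat.le_ceil r
  have hJr : (J : ℝ) ≤ 2 * r := by linarith [Nat.ceil_lt_add_one (zero_le_one.trans hr1)]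
  have hJ : 0 < J := Nat.cast_pos.1 (show (0 : ℝ) < J by linarith)
  have hρm : ρ ^ ((q - 1) / α) = r ^ (1 - q) := by
    rw [hρr, ← Real.rpow_mul (by linarith)]
    congr 1
    field_simp
    ring
  have hρ2 : ρ ^ 2 * r ^ (s + 1) = r ^ (1 - q) := by
    rw [hρr, ← Real.rpow_natCast, ← Real.rpow_mul (by linarith), ← Real.rpow_add (by linarith)]
    congr 1
    push_cast
    ring
  have hsum : Summable u :=
    ((summable_rpow_succ (by linarith)).mul_left D).of_nonneg_of_le hu htail
  have head : ∑ j ∈ range J, u j ≤ A * max 1 (s + 1)⁻¹ * 2 ^ (s + 1) * r ^ (1 - q) :=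
    calc ∑ j ∈ range J, u j ≤ ∑ j ∈ range J, A * ρ ^ 2 * ((j : ℝ) + 1) ^ s :=
          sum_le_sum fun j _ => hhead j
      _ = A * ρ ^ 2 * ∑ j ∈ range J, ((j : ℝ) + 1) ^ s := (mul_sum ..).symm
      _ ≤ A * ρ ^ 2 * (max 1 (s + 1)⁻¹ * (2 * r) ^ (s + 1)) := by
          gcongr
          exact (sum_range_rpow_succ_le hs J).trans (by gcongr; linarith)
      _ = A * max 1 (s + 1)⁻¹ * 2 ^ (s + 1) * r ^ (1 - q) := by
          rw [Real.mul_rpow zero_le_two (by linarith), ← hρ2]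
          ring
  have tail : ∑' j, u (j + J) ≤ D * (q - 1)⁻¹ * r ^ (1 - q) :=
    calc ∑' j, u (j + J) ≤ ∑' j, D * (((j + J : ℕ) : ℝ) + 1) ^ (-q) :=
          ((summable_nat_add_iff J).2 hsum).tsum_le_tsum (fun j => htail (j + J))
            ((summable_nat_add_iff J).2 ((summable_rpow_succ (by linarith)).mul_left D))
      _ = D * ∑' j, (((j + J : ℕ) : ℝ) + 1) ^ (-q) := tsum_mul_left
      _ ≤ D * ((q - 1)⁻¹ * r ^ (1 - q)) := by
          gcongr
          refine (tsum_rpow_succ_nat_add_le hq hJ).trans ?_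
          gcongr ?_ * ?_
          exact Real.rpow_le_rpow_of_nonpos (by linarith) hrJ (by linarith)
      _ = D * (q - 1)⁻¹ * r ^ (1 - q) := by ring
  rw [← hsum.sum_add_tsum_nat_add J, hρm]
  linarith

theorem stmt5_general (lam bcoef : ℕ → ℝ) (α η cl cu d m : ℝ)
    (hη : 1/2 < η) (hcl : 0 < cl)
    (hpos : ∀ j : ℕ, 1 ≤ j → 0 < lam j)
    (hlam : ∃ N : ℕ, ∀ j : ℕ, N ≤ j →
      cl * (j:ℝ) ^ (-α) ≤ lam j ∧ lam j ≤ cu * (j:ℝ) ^ (-α))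
    (hb : ∃ N : ℕ, ∀ j : ℕ, N ≤ j → |bcoef j| ≤ d * (j:ℝ) ^ (-η))
    (hm : (η - 1/2 < α ∧ m = (2*η - 1)/α) ∨ (α < η - 1/2 ∧ m = 2)) :
    ∃ K > (0:ℝ), ∃ ρ0 > (0:ℝ), ∀ ρ : ℝ, 0 < ρ → ρ < ρ0 →
      ρ ^ 2 * (∑' j : ℕ, ((lam (j+1) + ρ)⁻¹) ^ 2 * (bcoef (j+1)) ^ 2)
        ≤ K * ρ ^ m := by
  obtain ⟨A, hA, hlamA⟩ := exists_sq_le_mul_rpow_of_eventually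
    (eventually_abs_inv_le_of_mul_rpow_neg_le hcl (hlam.imp fun _ hN j hj => (hN j hj).1))
  obtain ⟨D, hD, hbD⟩ := exists_sq_le_mul_rpow_of_eventually (eventually_atTop.2 hb)
  have hterm (ρ : ℝ) (hρ : 0 < ρ) (j : ℕ) := tikhonov_bias_term_le
    (hpos (j + 1) (Nat.le_add_left 1 j)) hρ (Nat.cast_add_one_pos j) (hlamA j) (hbD j) hA
  rcases hm with ⟨hαη, rfl⟩ | ⟨hαη, rfl⟩
  · obtain ⟨K, hK⟩ := exists_tsum_le_mul_rpow_of_le_of_le (α := α) (q := 2 * η)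
      (by linarith) (by linarith) (mul_nonneg hA hD) hD
    refine ⟨max K 1, by positivity, 1, one_pos, fun ρ hρ hρ1 => ?_⟩
    rw [← tsum_mul_left]
    refine (hK ρ hρ hρ1.le _ (fun j => by positivity) (fun j => ?_) fun j => (hterm ρ hρ j).2).trans
      (by gcongr; exact le_max_left K 1)
    exact (mul_le_mul_of_nonneg_left (hterm ρ hρ j).1 (sq_nonneg ρ)).trans_eq (by ring)
  · have hsum := (summable_rpow_succ (p := 2 * α - 2 * η) (by linarith)).mul_left (A * D)
    set S := ∑' j : ℕ, A * D * ((j : ℝ) + 1) ^ (2 * α - 2 * η)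
    have hS : 0 ≤ S := tsum_nonneg fun j => by positivity
    refine ⟨S + 1, by positivity, 1, one_pos, fun ρ hρ _ => ?_⟩
    have hle : ∑' j : ℕ, ((lam (j+1) + ρ)⁻¹) ^ 2 * (bcoef (j+1)) ^ 2 ≤ S :=
      (hsum.of_nonneg_of_le (fun j => by positivity) fun j => (hterm ρ hρ j).1).tsum_le_tsum
        (fun j => (hterm ρ hρ j).1) hsum
    rw [Real.rpow_two]
    nlinarith [sq_nonneg ρ]

/-- rate of the squared Tikhonov bias
`ρ² ∑ (λ_j+ρ)⁻² ⟨β,φ_j⟩² = O(ρ^m)` as `ρ ↓ 0`, where the Fourier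
coefficients are abstracted as the sequence `bcoef`. -/
theorem stmt5 (lam bcoef : ℕ → ℝ) (α η cl cu d m : ℝ)
    (hα : 1 < α) (hη : 1/2 < η) (hcl : 0 < cl) (hclu : cl < cu) (hd : 0 < d)
    (hpos : ∀ j : ℕ, 1 ≤ j → 0 < lam j)
    (hlam : ∃ N : ℕ, ∀ j : ℕ, N ≤ j →
      cl * (j:ℝ) ^ (-α) ≤ lam j ∧ lam j ≤ cu * (j:ℝ) ^ (-α))
    (hb : ∃ N : ℕ, ∀ j : ℕ, N ≤ j → |bcoef j| ≤ d * (j:ℝ) ^ (-η))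
    (hm : (η - 1/2 < α ∧ m = (2*η - 1)/α) ∨ (α < η - 1/2 ∧ m = 2)) :
    ∃ K > (0:ℝ), ∃ ρ0 > (0:ℝ), ∀ ρ : ℝ, 0 < ρ → ρ < ρ0 →
      ρ ^ 2 * (∑' j : ℕ, ((lam (j+1) + ρ)⁻¹) ^ 2 * (bcoef (j+1)) ^ 2)
        ≤ K * ρ ^ m :=
  stmt5_general lam bcoef α η cl cu d m hη hcl hpos hlam hb hm
end

section
/- Under the decay conditions $c j^{-\alpha} \le \lambda_j \le C j^{-\alpha}$ ($\alpha > 1$) on the eigenvalues of a positive trace-class operator, there is a constant $K$ such that for all small $\rho > 0$, $\sum_{j\ge1} \lambda_j/(\lambda_j + \rho)^2 \le K \rho^{-1 - 1/\alpha}$. -/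
/-!
Split the series at `M = ⌈ρ^(-1/α)⌉`. By AM–GM every term is at most `1/(4ρ)`, so the first `M`
terms contribute `O(ρ^(-1-1/α))`. Beyond `M`, `λ/(λ+ρ)² ≤ λ/ρ² ≤ C j^(-α)/ρ²`, and the integral
test bounds the tail by `C M^(1-α)/((α-1)ρ²)`, which is again `O(ρ^(-1-1/α))`.
-/

open Real Set MeasureTheory

theorem tsum_rpow_neg_nat_add_le {α : ℝ} (hα : 1 < α) {N : ℕ} (hN : 0 < N) :
    ∑' n : ℕ, ((n + N + 1 : ℕ) : ℝ) ^ (-α) ≤ (N : ℝ) ^ (1 - α) / (α - 1) := by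
  have hN' : (0 : ℝ) < N := by exact_mod_cast hN
  have hexp : -α < -1 := by linarith
  calc ∑' n : ℕ, ((n + N + 1 : ℕ) : ℝ) ^ (-α)
      ≤ ∫ x in Ioi (N : ℝ), x ^ (-α) :=
        ((antitoneOn_rpow_Ioi_of_exponent_nonpos (by linarith)).mono
            (Ici_subset_Ioi.mpr hN')).tsum_comp_add_le_integral N
          (integrableOn_Ioi_rpow_of_lt hexp hN') fun t ht => rpow_nonneg (hN'.trans ht).le _
    _ = (N : ℝ) ^ (1 - α) / (α - 1) := by
        rw [integral_Ioi_rpow_of_lt hexp hN', neg_div, ← div_neg, neg_add', neg_neg,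
          neg_add_eq_sub]

theorem tsum_le_nat_mul_add_tsum {f g : ℕ → ℝ} {a : ℝ} (M : ℕ) (hf : ∀ j, 0 ≤ f j)
    (hhead : ∀ j, f j ≤ a) (htail : ∀ i, f (i + M) ≤ g i) (hg : Summable g) :
    ∑' j, f j ≤ M * a + ∑' i, g i := by
  have htail_summable : Summable fun i => f (i + M) :=
    hg.of_nonneg_of_le (fun i => hf _) htail
  rw [← (summable_nat_add_iff M).mp htail_summable |>.sum_add_tsum_nat_add M]
  refine add_le_add ?_ (htail_summable.tsum_le_tsum htail hg)
  calc ∑ j ∈ Finset.range M, f j ≤ ∑ _j ∈ Finset.range M, a :=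
        Finset.sum_le_sum fun j _ => hhead j
    _ = M * a := by simp

theorem div_add_sq_le_inv_four_mul {x ρ : ℝ} (hx : 0 ≤ x) (hρ : 0 < ρ) :
    x / (x + ρ) ^ 2 ≤ (4 * ρ)⁻¹ := by
  rw [← one_div, div_le_div_iff₀ (by positivity) (by positivity)]
  nlinarith [sq_nonneg (x - ρ)]

theorem tsum_div_add_sq_le_of_split {lam : ℕ → ℝ} {α C ρ : ℝ} (hα : 1 < α) (hC : 0 ≤ C)
    (hρ : 0 < ρ) (h0 : ∀ j, 0 ≤ lam (j + 1)) {M : ℕ} (hM : 0 < M)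
    (hle : ∀ j, M ≤ j → lam j ≤ C * (j : ℝ) ^ (-α)) :
    ∑' j, lam (j + 1) / (lam (j + 1) + ρ) ^ 2
      ≤ M * (4 * ρ)⁻¹ + C / ρ ^ 2 * ((M : ℝ) ^ (1 - α) / (α - 1)) := by
  have hdecay : Summable fun n : ℕ => ((n + M + 1 : ℕ) : ℝ) ^ (-α) := by
    have := (summable_nat_add_iff (M + 1)).mpr (Real.summable_nat_rpow.mpr (by linarith : -α < -1))
    simpa only [add_assoc] using this
  calc ∑' j, lam (j + 1) / (lam (j + 1) + ρ) ^ 2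
      ≤ M * (4 * ρ)⁻¹ + ∑' i, C / ρ ^ 2 * ((i + M + 1 : ℕ) : ℝ) ^ (-α) := by
        refine tsum_le_nat_mul_add_tsum M (fun j => by have := h0 j; positivity)
          (fun j => div_add_sq_le_inv_four_mul (h0 j) hρ) (fun i => ?_) (hdecay.mul_left _)
        calc lam (i + M + 1) / (lam (i + M + 1) + ρ) ^ 2 ≤ lam (i + M + 1) / ρ ^ 2 := by
              have := h0 (i + M)
              gcongr
              linarith
          _ ≤ C / ρ ^ 2 * ((i + M + 1 : ℕ) : ℝ) ^ (-α) := by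
              rw [div_mul_eq_mul_div]
              gcongr
              exact hle _ (by omega)
    _ ≤ M * (4 * ρ)⁻¹ + C / ρ ^ 2 * ((M : ℝ) ^ (1 - α) / (α - 1)) := by
        rw [tsum_mul_left]
        gcongr
        exact tsum_rpow_neg_nat_add_le hα hM

theorem rpow_neg_one_div_div_self {ρ : ℝ} (hρ : 0 < ρ) (α : ℝ) :
    ρ ^ (-1 / α) / ρ = ρ ^ (-(1 + 1 / α)) := by
  rw [← rpow_sub_one hρ.ne']
  ring_nf

theorem rpow_neg_one_div_rpow_div_sq {ρ α : ℝ} (hρ : 0 < ρ) (hα : α ≠ 0) :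
    (ρ ^ (-1 / α)) ^ (1 - α) / ρ ^ 2 = ρ ^ (-(1 + 1 / α)) := by
  rw [← rpow_mul hρ.le, ← rpow_two, ← rpow_sub hρ]
  congr 1
  field_simp
  ring

theorem tsum_div_add_sq_le_rpow {lam : ℕ → ℝ} {α C ρ : ℝ} (hα : 1 < α) (hC : 0 ≤ C)
    (hρ : 0 < ρ) (h0 : ∀ j, 0 ≤ lam (j + 1)) {N : ℕ}
    (hle : ∀ j, N ≤ j → lam j ≤ C * (j : ℝ) ^ (-α)) (hN : ((max N 1 : ℕ) : ℝ) ≤ ρ ^ (-1 / α)) :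
    ∑' j, lam (j + 1) / (lam (j + 1) + ρ) ^ 2 ≤ (1 / 2 + C / (α - 1)) * ρ ^ (-(1 + 1 / α)) := by
  set x := ρ ^ (-1 / α)
  set M := ⌈x⌉₊
  have hx1 : 1 ≤ x := le_trans (by exact_mod_cast le_max_right N 1) hN
  have hxM : x ≤ M := Nat.le_ceil x
  have hMx : (M : ℝ) ≤ 2 * x := by linarith [Nat.ceil_lt_add_one (zero_le_one.trans hx1)]
  have hNM : N ≤ M := by
    exact_mod_cast (Nat.cast_le.mpr (le_max_left N 1)).trans (hN.trans hxM)
  have hM : 0 < M := Nat.ceil_pos.mpr (zero_lt_one.trans_le hx1)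
  calc ∑' j, lam (j + 1) / (lam (j + 1) + ρ) ^ 2
      ≤ M * (4 * ρ)⁻¹ + C / ρ ^ 2 * ((M : ℝ) ^ (1 - α) / (α - 1)) :=
        tsum_div_add_sq_le_of_split hα hC hρ h0 hM fun j hj => hle j (hNM.trans hj)
    _ ≤ 2 * x * (4 * ρ)⁻¹ + C / ρ ^ 2 * (x ^ (1 - α) / (α - 1)) := by
        gcongr ?_ * _ + _ * (?_ / _)
        exact rpow_le_rpow_of_nonpos (zero_lt_one.trans_le hx1) hxM (by linarith)
    _ = 1 / 2 * (x / ρ) + C / (α - 1) * (x ^ (1 - α) / ρ ^ 2) := by ring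
    _ = (1 / 2 + C / (α - 1)) * ρ ^ (-(1 + 1 / α)) := by
        rw [rpow_neg_one_div_div_self hρ, rpow_neg_one_div_rpow_div_sq hρ (by linarith)]
        ring

theorem stmt6_general (lam : ℕ → ℝ) (α cl cu : ℝ)
    (hα : 1 < α)
    (hpos : ∀ j : ℕ, 1 ≤ j → 0 < lam j)
    (hlam : ∃ N : ℕ, ∀ j : ℕ, N ≤ j →
      cl * (j:ℝ) ^ (-α) ≤ lam j ∧ lam j ≤ cu * (j:ℝ) ^ (-α)) :
    ∃ K : ℝ, ∃ ρ0 > (0:ℝ), ∀ ρ : ℝ, 0 < ρ → ρ < ρ0 →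
      (∑' j : ℕ, lam (j+1) / (lam (j+1) + ρ) ^ 2)
        ≤ K * ρ ^ (-(1 + 1/α)) := by
  obtain ⟨N, hN⟩ := hlam
  have hle : ∀ j, N ≤ j → lam j ≤ cu * (j : ℝ) ^ (-α) := fun j hj => (hN j hj).2
  have hcu : 0 ≤ cu := by
    have hupper := hle (N + 1) (by omega)
    have hlam_pos := hpos (N + 1) (by omega)
    exact (pos_of_mul_pos_left (hlam_pos.trans_le hupper) (by positivity)).le
  set B : ℝ := ((max N 1 : ℕ) : ℝ)
  have hB : 0 < B := by positivity
  refine ⟨1 / 2 + cu / (α - 1), B ^ (-α), by positivity, fun ρ hρ hρB => ?_⟩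
  refine tsum_div_add_sq_le_rpow hα hcu hρ (fun j => (hpos (j + 1) (by omega)).le) hle ?_
  calc B = (B ^ (-α)) ^ (-1 / α) := by
        rw [← rpow_mul hB.le, show -α * (-1 / α) = 1 by field_simp, rpow_one]
    _ ≤ ρ ^ (-1 / α) :=
        rpow_le_rpow_of_nonpos hρ hρB.le (by rw [neg_div]; exact neg_nonpos.mpr (by positivity))

/-- the key variance bound `∑ λ_j/(λ_j+ρ)² ≤ K ρ^{-1-1/α}`. -/
theorem stmt6 (lam : ℕ → ℝ) (α cl cu : ℝ)
    (hα : 1 < α) (hcl : 0 < cl) (hclu : cl < cu)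
    (hpos : ∀ j : ℕ, 1 ≤ j → 0 < lam j)
    (hlam : ∃ N : ℕ, ∀ j : ℕ, N ≤ j →
      cl * (j:ℝ) ^ (-α) ≤ lam j ∧ lam j ≤ cu * (j:ℝ) ^ (-α)) :
    ∃ K : ℝ, ∃ ρ0 > (0:ℝ), ∀ ρ : ℝ, 0 < ρ → ρ < ρ0 →
      (∑' j : ℕ, lam (j+1) / (lam (j+1) + ρ) ^ 2)
        ≤ K * ρ ^ (-(1 + 1/α)) :=
  stmt6_general lam α cl cu hα hpos hlam
end

section
/- Under the oracle setting with $X = Y+Z$ uncorrelated, orthogonal eigenspaces, finite fourth moments, and independent scores $\langle X,\phi_j\rangle$: for any fixed $\rho > 0$, if at least one $\langle\beta,\phi_{j1}\rangle \ne 0$ for $1 \le j \le r$, then $\mathrm{MSE}(\widetilde{\beta}_{TR}) > \mathrm{MSE}(\widetilde{\beta}_{HR})$ for all sufficiently large sample size $n$. -/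
/-!
Outside the first `r` coordinates the two estimators coincide; on them the hybrid estimator
divides by `λⱼ` and is unbiased, whereas Tikhonov divides by `λⱼ + ρ` and has bias
`-ρ⟪β, φⱼ⟫ / (λⱼ + ρ)`. Each coordinate `⟪Ĉ, φⱼ⟫` is the sample mean of the i.i.d. variables
`yᵢ ⟪Xᵢ, φⱼ⟫`, whose mean is `λⱼ ⟪β, φⱼ⟫`, so the bias–variance decomposition gives exactly
`MSE(TR) - MSE(HR) = ∑_{j<r} (ρ⟪β, φⱼ⟫ / (λⱼ + ρ))² + C / n`. The first term is positive and
does not depend on `n`.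
-/

open MeasureTheory ProbabilityTheory
open scoped RealInnerProductSpace

section HilbertBasis

variable {ι H : Type*} [NormedAddCommGroup H] [InnerProductSpace ℝ H]

theorem Orthonormal.norm_sq_sub_norm_add_sum_smul_sq {v : ι → H} (hv : Orthonormal ℝ v)
    (s : Finset ι) (w : ι → ℝ) (x : H) :
    ‖x‖ ^ 2 - ‖x + ∑ i ∈ s, w i • v i‖ ^ 2 = ∑ i ∈ s, (⟪x, v i⟫ ^ 2 - (⟪x, v i⟫ + w i) ^ 2) := by
  have hnorm : ‖∑ i ∈ s, w i • v i‖ ^ 2 = ∑ i ∈ s, w i ^ 2 := by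
    rw [← real_inner_self_eq_norm_sq, hv.inner_sum]
    simp [sq]
  have hterm : ∀ i, ⟪x, v i⟫ ^ 2 - (⟪x, v i⟫ + w i) ^ 2 = -(2 * (w i * ⟪x, v i⟫) + w i ^ 2) :=
    fun i => by ring
  rw [norm_add_sq_real, hnorm, inner_sum, Finset.mul_sum, Finset.sum_congr rfl fun i _ => hterm i,
    Finset.sum_neg_distrib, Finset.sum_add_distrib]
  simp only [real_inner_smul_right]
  ring

variable (e : HilbertBasis ι ℝ H) {g : ι → ℝ}

theorem HilbertBasis.hasSum_smul_of_summable_sq (hg : Summable fun i => g i ^ 2) :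
    ∃ x : H, HasSum (fun i => g i • e i) x ∧ ∀ k, ⟪x, e k⟫ = g k := by
  have hmem : Memℓp g 2 := (memℓp_gen_iff (by norm_num)).mpr (by simpa using hg)
  refine ⟨e.repr.symm ⟨g, hmem⟩, e.hasSum_repr_symm _, fun k => ?_⟩
  rw [real_inner_comm, ← e.repr_apply_apply, LinearIsometryEquiv.apply_symm_apply]

theorem HilbertBasis.summable_smul_of_summable_sq (hg : Summable fun i => g i ^ 2) :
    Summable fun i => g i • e i := by
  obtain ⟨x, hx, -⟩ := e.hasSum_smul_of_summable_sq hg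
  exact hx.summable

theorem HilbertBasis.inner_tsum_smul (hg : Summable fun i => g i ^ 2) (k : ι) :
    ⟪∑' i, g i • e i, e k⟫ = g k := by
  obtain ⟨x, hx, hxe⟩ := e.hasSum_smul_of_summable_sq hg
  rw [hx.tsum_eq, hxe]

theorem HilbertBasis.summable_mul_inner_sq {m : ι → ℝ} {M : ℝ} (hm : ∀ i, |m i| ≤ M) (x : H) :
    Summable fun i => (m i * ⟪x, e i⟫) ^ 2 := by
  refine Summable.of_nonneg_of_le (fun i => sq_nonneg _) (fun i => ?_)
    ((e.orthonormal.inner_products_summable (x := x)).mul_left (M ^ 2))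
  rw [mul_pow, Real.norm_eq_abs, sq_abs, real_inner_comm, ← sq_abs (m i)]
  gcongr
  exact hm i

end HilbertBasis

section Estimators

variable {ι H : Type*} [NormedAddCommGroup H] [InnerProductSpace ℝ H]

noncomputable def tikhonov (e : HilbertBasis ι ℝ H) (lam : ι → ℝ) (ρ : ℝ) (x : H) : H :=
  ∑' j, ((lam j + ρ)⁻¹ * ⟪x, e j⟫) • e j

noncomputable def hybrid (e : HilbertBasis ℕ ℝ H) (lam : ℕ → ℝ) (ρ : ℝ) (r : ℕ) (x : H) : H :=
  (∑ j ∈ Finset.range r, ((lam j)⁻¹ * ⟪x, e j⟫) • e j)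
    + ∑' j, ((lam (r + j) + ρ)⁻¹ * ⟪x, e (r + j)⟫) • e (r + j)

variable {lam : ι → ℝ} {ρ : ℝ}

theorem abs_inv_add_le_inv (hρ : 0 < ρ) (hlam : ∀ j, 0 ≤ lam j) (j : ι) :
    |(lam j + ρ)⁻¹| ≤ ρ⁻¹ := by
  have hpos : 0 < lam j + ρ := by linarith [hlam j]
  rw [abs_of_pos (inv_pos.mpr hpos)]
  exact inv_anti₀ hρ (by linarith [hlam j])

theorem summable_tikhonov (e : HilbertBasis ι ℝ H) (hρ : 0 < ρ) (hlam : ∀ j, 0 ≤ lam j) (x : H) :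
    Summable fun j => ((lam j + ρ)⁻¹ * ⟪x, e j⟫) • e j :=
  e.summable_smul_of_summable_sq (e.summable_mul_inner_sq (abs_inv_add_le_inv hρ hlam) x)

theorem inner_tikhonov (e : HilbertBasis ι ℝ H) (hρ : 0 < ρ) (hlam : ∀ j, 0 ≤ lam j) (x : H)
    (k : ι) : ⟪tikhonov e lam ρ x, e k⟫ = (lam k + ρ)⁻¹ * ⟪x, e k⟫ :=
  e.inner_tsum_smul (e.summable_mul_inner_sq (abs_inv_add_le_inv hρ hlam) x) k

theorem hybrid_eq_tikhonov_add {e : HilbertBasis ℕ ℝ H} {lam : ℕ → ℝ} (hρ : 0 < ρ)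
    (hlam : ∀ j, 0 ≤ lam j) (r : ℕ) (x : H) :
    hybrid e lam ρ r x = tikhonov e lam ρ x
      + ∑ j ∈ Finset.range r, (((lam j)⁻¹ - (lam j + ρ)⁻¹) * ⟪x, e j⟫) • e j := by
  rw [hybrid, tikhonov, ← (summable_tikhonov e hρ hlam x).sum_add_tsum_nat_add r]
  simp only [sub_mul, sub_smul, Finset.sum_sub_distrib, add_comm _ r]
  abel

theorem norm_tikhonov_sub_sq_sub_norm_hybrid_sub_sq {e : HilbertBasis ℕ ℝ H} {lam : ℕ → ℝ}
    (hρ : 0 < ρ) (hlam : ∀ j, 0 ≤ lam j) (r : ℕ) (x β : H) :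
    ‖tikhonov e lam ρ x - β‖ ^ 2 - ‖hybrid e lam ρ r x - β‖ ^ 2
      = ∑ j ∈ Finset.range r, (((lam j + ρ)⁻¹ * ⟪x, e j⟫ - ⟪β, e j⟫) ^ 2
          - ((lam j)⁻¹ * ⟪x, e j⟫ - ⟪β, e j⟫) ^ 2) := by
  rw [hybrid_eq_tikhonov_add hρ hlam, add_sub_right_comm,
    e.orthonormal.norm_sq_sub_norm_add_sum_smul_sq]
  refine Finset.sum_congr rfl fun j _ => ?_
  rw [inner_sub_left, inner_tikhonov e hρ hlam]
  ring

end Estimators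

section SampleMean

variable {Ω : Type*} [MeasurableSpace Ω] {μ : Measure Ω}

theorem memLp_two_of_sq_le {f g : Ω → ℝ} (hf : AEStronglyMeasurable f μ) (hg : Integrable g μ)
    (hfg : ∀ ω, f ω ^ 2 ≤ g ω) : MemLp f 2 μ :=
  (memLp_two_iff_integrable_sq hf).mpr <| hg.mono' (hf.pow 2) <| ae_of_all _ fun ω => by
    rw [Real.norm_eq_abs, abs_of_nonneg (sq_nonneg _)]
    exact hfg ω

theorem integrable_sq_of_integrable_pow_four [IsFiniteMeasure μ] {f : Ω → ℝ}
    (hf : AEStronglyMeasurable f μ) (h4 : Integrable (fun ω => f ω ^ 4) μ) :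
    Integrable (fun ω => f ω ^ 2) μ :=
  ((memLp_two_iff_integrable_sq (hf.pow 2)).mpr
    (by simpa only [Pi.pow_apply, ← pow_mul] using h4)).integrable one_le_two

noncomputable def sampleMean (Z : ℕ → Ω → ℝ) (n : ℕ) : Ω → ℝ :=
  fun ω => (n : ℝ)⁻¹ * ∑ i ∈ Finset.range n, Z i ω

variable {Z : ℕ → Ω → ℝ}

theorem memLp_sampleMean (hid : ∀ i, IdentDistrib (Z i) (Z 0) μ μ) (hZ : MemLp (Z 0) 2 μ)
    (n : ℕ) : MemLp (sampleMean Z n) 2 μ := by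
  have hsum := memLp_finsetSum' (Finset.range n) fun i _ => (hid i).memLp_iff.mpr hZ
  unfold sampleMean
  simpa only [Finset.sum_apply] using hsum.const_mul (n : ℝ)⁻¹

theorem integral_sampleMean (hid : ∀ i, IdentDistrib (Z i) (Z 0) μ μ) (hZ : Integrable (Z 0) μ)
    {n : ℕ} (hn : n ≠ 0) : ∫ ω, sampleMean Z n ω ∂μ = ∫ ω, Z 0 ω ∂μ := by
  unfold sampleMean
  rw [integral_const_mul, integral_finsetSum _ fun i _ => (hid i).integrable_iff.mpr hZ]
  simp only [(hid _).integral_eq, Finset.sum_const, Finset.card_range, nsmul_eq_mul]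
  field_simp

theorem variance_sampleMean [IsFiniteMeasure μ] (hind : Pairwise fun i j => Z i ⟂ᵢ[μ] Z j)
    (hid : ∀ i, IdentDistrib (Z i) (Z 0) μ μ) (hZ : MemLp (Z 0) 2 μ) (n : ℕ) :
    Var[sampleMean Z n; μ] = Var[Z 0; μ] / n := by
  have hsum : (fun ω => ∑ i ∈ Finset.range n, Z i ω) = ∑ i ∈ Finset.range n, Z i := by
    ext ω; simp
  unfold sampleMean
  rw [variance_const_mul, hsum, IndepFun.variance_sum
    (fun i _ => (hid i).memLp_iff.mpr hZ) fun i _ j _ hij => hind hij]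
  simp only [(hid _).variance_eq, Finset.sum_const, Finset.card_range, nsmul_eq_mul]
  rcases eq_or_ne n 0 with rfl | hn
  · simp
  · field_simp

theorem integral_sq_const_mul_sub [IsProbabilityMeasure μ] {c : Ω → ℝ} (hc : MemLp c 2 μ)
    (a b : ℝ) : ∫ ω, (a * c ω - b) ^ 2 ∂μ = (a * ∫ ω, c ω ∂μ - b) ^ 2 + a ^ 2 * Var[c; μ] := by
  have hY : MemLp (fun ω => a * c ω - b) 2 μ := (hc.const_mul a).sub (memLp_const b)
  have hvar := variance_eq_sub hY
  rw [variance_sub_const (hc.const_mul a).aestronglyMeasurable, variance_const_mul,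
    integral_sub ((hc.integrable one_le_two).const_mul a) (integrable_const b),
    integral_const_mul, integral_const] at hvar
  simp only [Pi.pow_apply, probReal_univ, smul_eq_mul, one_mul] at hvar
  linarith

theorem integral_sq_const_mul_sampleMean_sub [IsProbabilityMeasure μ]
    (hind : Pairwise fun i j => Z i ⟂ᵢ[μ] Z j) (hid : ∀ i, IdentDistrib (Z i) (Z 0) μ μ)
    (hZ : MemLp (Z 0) 2 μ) {n : ℕ} (hn : n ≠ 0) (a b : ℝ) :
    ∫ ω, (a * sampleMean Z n ω - b) ^ 2 ∂μ
      = (a * ∫ ω, Z 0 ω ∂μ - b) ^ 2 + a ^ 2 * Var[Z 0; μ] / n := by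
  rw [integral_sq_const_mul_sub (memLp_sampleMean hid hZ n),
    integral_sampleMean hid (hZ.integrable one_le_two) hn, variance_sampleMean hind hid hZ]
  ring

end SampleMean

section SecondMoments

variable {Ω ι H : Type*} [MeasurableSpace Ω] {μ : Measure Ω}
  [NormedAddCommGroup H] [InnerProductSpace ℝ H] [MeasurableSpace H] [BorelSpace H]
  {X : Ω → H}

-- Unlike `Measurable.inner_const`, this needs no second countability of `H`.
theorem Measurable.inner_const' (hX : Measurable X) (w : H) : Measurable fun ω => ⟪X ω, w⟫ :=
  (continuous_id.inner continuous_const).measurable.comp hX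

omit [MeasurableSpace H] [BorelSpace H] in
theorem abs_inner_mul_inner_le (x w u : H) : |⟪x, w⟫ * ⟪x, u⟫| ≤ ‖w‖ * ‖u‖ * ‖x‖ ^ 2 := by
  rw [abs_mul]
  calc |⟪x, w⟫| * |⟪x, u⟫| ≤ (‖x‖ * ‖w‖) * (‖x‖ * ‖u‖) :=
        mul_le_mul (abs_real_inner_le_norm _ _) (abs_real_inner_le_norm _ _) (abs_nonneg _)
          (by positivity)
    _ = ‖w‖ * ‖u‖ * ‖x‖ ^ 2 := by ring

theorem integrable_inner_mul_inner (hX : Measurable X)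
    (hX2 : Integrable (fun ω => ‖X ω‖ ^ 2) μ) (w u : H) :
    Integrable (fun ω => ⟪X ω, w⟫ * ⟪X ω, u⟫) μ :=
  (hX2.const_mul (‖w‖ * ‖u‖)).mono'
    ((hX.inner_const' w).mul (hX.inner_const' u)).aestronglyMeasurable
    (ae_of_all _ fun ω => abs_inner_mul_inner_le (X ω) w u)

theorem integral_inner_mul_inner_eq (e : HilbertBasis ι ℝ H) (hX : Measurable X)
    (hX2 : Integrable (fun ω => ‖X ω‖ ^ 2) μ) {u v : H}
    (hbasis : ∀ k, ∫ ω, ⟪X ω, e k⟫ * ⟪X ω, u⟫ ∂μ = ⟪v, e k⟫) (w : H) :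
    ∫ ω, ⟪X ω, w⟫ * ⟪X ω, u⟫ ∂μ = ⟪v, w⟫ := by
  let M : H →ₗ[ℝ] ℝ :=
    { toFun := fun w => ∫ ω, ⟪X ω, w⟫ * ⟪X ω, u⟫ ∂μ
      map_add' := fun w w' => by
        simp only [inner_add_right, add_mul]
        exact integral_add (integrable_inner_mul_inner hX hX2 w u)
          (integrable_inner_mul_inner hX hX2 w' u)
      map_smul' := fun c w => by
        simp only [real_inner_smul_right, mul_assoc, integral_const_mul, smul_eq_mul,
          RingHom.id_apply] }
  -- `𝔼‖X‖² < ∞` makes `M` continuous, so it is determined on the dense span of the basis.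
  have hbound : ∀ w, ‖M w‖ ≤ (‖u‖ * ∫ ω, ‖X ω‖ ^ 2 ∂μ) * ‖w‖ := fun w => by
    calc ‖M w‖ ≤ ∫ ω, ‖⟪X ω, w⟫ * ⟪X ω, u⟫‖ ∂μ := norm_integral_le_integral_norm _
      _ ≤ ∫ ω, ‖w‖ * ‖u‖ * ‖X ω‖ ^ 2 ∂μ :=
        integral_mono (integrable_inner_mul_inner hX hX2 w u).norm (hX2.const_mul _)
          fun ω => abs_inner_mul_inner_le (X ω) w u
      _ = (‖u‖ * ∫ ω, ‖X ω‖ ^ 2 ∂μ) * ‖w‖ := by rw [integral_const_mul]; ring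
  have hM : M.mkContinuous _ hbound = innerSL ℝ v :=
    ContinuousLinearMap.ext_on (Submodule.dense_iff_topologicalClosure_eq_top.mpr e.dense_span)
      (by rintro _ ⟨k, rfl⟩; exact hbasis k)
  exact DFunLike.congr_fun hM w

theorem integral_inner_mul_inner_of_indep (e : HilbertBasis ι ℝ H) (hX : Measurable X)
    (hX2 : Integrable (fun ω => ‖X ω‖ ^ 2) μ) {lam : ι → ℝ}
    (hind : Pairwise fun k l => (fun ω => ⟪X ω, e k⟫) ⟂ᵢ[μ] fun ω => ⟪X ω, e l⟫)
    (h0 : ∀ k, ∫ ω, ⟪X ω, e k⟫ ∂μ = 0) (hvar : ∀ k, ∫ ω, ⟪X ω, e k⟫ ^ 2 ∂μ = lam k)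
    (w : H) (j : ι) : ∫ ω, ⟪X ω, w⟫ * ⟪X ω, e j⟫ ∂μ = lam j * ⟪w, e j⟫ := by
  have hbasis : ∀ k, ∫ ω, ⟪X ω, e k⟫ * ⟪X ω, e j⟫ ∂μ = ⟪lam j • e j, e k⟫ := by
    intro k
    classical
    rw [real_inner_smul_left, orthonormal_iff_ite.mp e.orthonormal]
    rcases eq_or_ne j k with rfl | hjk
    · simp only [← sq, hvar, if_true, mul_one]
    · rw [if_neg hjk, mul_zero]
      have := (hind hjk.symm).integral_mul_eq_mul_integral
        (hX.inner_const' _).aestronglyMeasurable (hX.inner_const' _).aestronglyMeasurable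
      simpa only [Pi.mul_apply, h0, zero_mul] using this
  rw [integral_inner_mul_inner_eq e hX hX2 hbasis w, real_inner_smul_left, real_inner_comm]

theorem integral_inner_add_mul_inner_of_indep (e : HilbertBasis ι ℝ H) (hX : Measurable X)
    (hX2 : Integrable (fun ω => ‖X ω‖ ^ 2) μ) {lam : ι → ℝ}
    (hind : Pairwise fun k l => (fun ω => ⟪X ω, e k⟫) ⟂ᵢ[μ] fun ω => ⟪X ω, e l⟫)
    (h0 : ∀ k, ∫ ω, ⟪X ω, e k⟫ ∂μ = 0) (hvar : ∀ k, ∫ ω, ⟪X ω, e k⟫ ^ 2 ∂μ = lam k)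
    {ε : Ω → ℝ} (hε : Measurable ε) (hε0 : ∫ ω, ε ω ∂μ = 0) (hεX : ε ⟂ᵢ[μ] X) (β : H) (j : ι)
    (hint : Integrable (fun ω => (⟪X ω, β⟫ + ε ω) * ⟪X ω, e j⟫) μ) :
    ∫ ω, (⟪X ω, β⟫ + ε ω) * ⟪X ω, e j⟫ ∂μ = lam j * ⟪β, e j⟫ := by
  have hβ := integrable_inner_mul_inner hX hX2 β (e j)
  have hεint : Integrable (fun ω => ε ω * ⟪X ω, e j⟫) μ :=
    (hint.sub hβ).congr (ae_of_all _ fun ω => by simp only [Pi.sub_apply]; ring)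
  have hεξ : ∫ ω, ε ω * ⟪X ω, e j⟫ ∂μ = 0 := by
    have := (hεX.comp measurable_id (measurable_id.inner_const' (e j))).integral_mul_eq_mul_integral
      hε.aestronglyMeasurable (hX.inner_const' _).aestronglyMeasurable
    simpa only [Pi.mul_apply, Function.comp_def, id, hε0, zero_mul] using this
  simp only [add_mul]
  rw [integral_add hβ hεint, hεξ, add_zero,
    integral_inner_mul_inner_of_indep e hX hX2 hind h0 hvar]

end SecondMoments

section MeanSquaredError

variable {Ω H : Type*} [MeasurableSpace Ω] {μ : Measure Ω}
  [NormedAddCommGroup H] [InnerProductSpace ℝ H] {lam : ℕ → ℝ} {ρ : ℝ}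

theorem memLp_inner_of_integrable_sq_err_tikhonov [IsFiniteMeasure μ] (e : HilbertBasis ℕ ℝ H)
    (hρ : 0 < ρ) (hlam : ∀ j, 0 ≤ lam j) {C : Ω → H} {β : H}
    (hT : Integrable (fun ω => ‖tikhonov e lam ρ (C ω) - β‖ ^ 2) μ) (j : ℕ)
    (hC : AEStronglyMeasurable (fun ω => ⟪C ω, e j⟫) μ) : MemLp (fun ω => ⟪C ω, e j⟫) 2 μ := by
  have hcoord : ∀ ω, ⟪tikhonov e lam ρ (C ω) - β, e j⟫ = (lam j + ρ)⁻¹ * ⟪C ω, e j⟫ - ⟪β, e j⟫ :=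
    fun ω => by rw [inner_sub_left, inner_tikhonov e hρ hlam]
  have herr : MemLp (fun ω => (lam j + ρ)⁻¹ * ⟪C ω, e j⟫ - ⟪β, e j⟫) 2 μ := by
    refine memLp_two_of_sq_le ((hC.const_mul _).sub aestronglyMeasurable_const) hT fun ω => ?_
    rw [← hcoord, ← sq_abs]
    have := abs_real_inner_le_norm (tikhonov e lam ρ (C ω) - β) (e j)
    rw [e.orthonormal.1 j, mul_one] at this
    exact pow_le_pow_left₀ (abs_nonneg _) this 2
  have hne : lam j + ρ ≠ 0 := by linarith [hlam j]
  convert (herr.add (memLp_const ⟪β, e j⟫)).const_mul (lam j + ρ) using 1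
  funext ω
  simp only [Pi.add_apply, sub_add_cancel]
  field_simp

theorem integral_sq_err_tikhonov_sub_hybrid [IsProbabilityMeasure μ] (e : HilbertBasis ℕ ℝ H)
    (hρ : 0 < ρ) (hlam : ∀ j, 0 < lam j) (r : ℕ) (β : H) {Z : ℕ → ℕ → Ω → ℝ}
    (hind : ∀ j, Pairwise fun i k => Z j i ⟂ᵢ[μ] Z j k)
    (hid : ∀ j i, IdentDistrib (Z j i) (Z j 0) μ μ) (hZ : ∀ j, MemLp (Z j 0) 2 μ)
    (hmean : ∀ j, ∫ ω, Z j 0 ω ∂μ = lam j * ⟪β, e j⟫) {n : ℕ} (hn : n ≠ 0) {C : Ω → H}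
    (hC : ∀ ω j, ⟪C ω, e j⟫ = sampleMean (Z j) n ω)
    (hT : Integrable (fun ω => ‖tikhonov e lam ρ (C ω) - β‖ ^ 2) μ)
    (hH : Integrable (fun ω => ‖hybrid e lam ρ r (C ω) - β‖ ^ 2) μ) :
    (∫ ω, ‖tikhonov e lam ρ (C ω) - β‖ ^ 2 ∂μ) - ∫ ω, ‖hybrid e lam ρ r (C ω) - β‖ ^ 2 ∂μ
      = ∑ j ∈ Finset.range r, (ρ * ⟪β, e j⟫ / (lam j + ρ)) ^ 2
        + (∑ j ∈ Finset.range r, (((lam j + ρ)⁻¹) ^ 2 - ((lam j)⁻¹) ^ 2) * Var[Z j 0; μ]) / n := by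
  have hsq : ∀ j (a : ℝ), Integrable (fun ω => (a * sampleMean (Z j) n ω - ⟪β, e j⟫) ^ 2) μ :=
    fun j a => (((memLp_sampleMean (hid j) (hZ j) n).const_mul a).sub (memLp_const _)).integrable_sq
  have hdiff : ∀ j, Integrable (fun ω => ((lam j + ρ)⁻¹ * sampleMean (Z j) n ω - ⟪β, e j⟫) ^ 2
      - ((lam j)⁻¹ * sampleMean (Z j) n ω - ⟪β, e j⟫) ^ 2) μ := fun j => (hsq j _).sub (hsq j _)
  rw [← integral_sub hT hH]
  simp only [norm_tikhonov_sub_sq_sub_norm_hybrid_sub_sq hρ (fun j => (hlam j).le), hC]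
  rw [integral_finsetSum _ fun j _ => hdiff j, Finset.sum_div, ← Finset.sum_add_distrib]
  refine Finset.sum_congr rfl fun j _ => ?_
  rw [integral_sub (hsq j _) (hsq j _), integral_sq_const_mul_sampleMean_sub (hind j) (hid j)
    (hZ j) hn, integral_sq_const_mul_sampleMean_sub (hind j) (hid j) (hZ j) hn, hmean]
  have : lam j ≠ 0 := (hlam j).ne'
  have : lam j + ρ ≠ 0 := by linarith [hlam j]
  field_simp
  ring

end MeanSquaredError

theorem exists_forall_ge_pos_add_div {K : ℝ} (hK : 0 < K) (c : ℝ) :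
    ∃ N : ℕ, ∀ n ≥ N, 0 < K + c / n :=
  Filter.eventually_atTop.mp <|
    (tendsto_const_div_atTop_nhds_zero_nat c).eventually (Ioi_mem_nhds (neg_lt_zero.mpr hK)) |>.mono
      fun n hn => by linarith [hn]

theorem stmt16_general {Ω H : Type*} [MeasurableSpace Ω]
    [NormedAddCommGroup H] [InnerProductSpace ℝ H]
    [MeasurableSpace H] [BorelSpace H]
    (μ : Measure Ω) [IsProbabilityMeasure μ]
    (e : HilbertBasis ℕ ℝ H) (lam : ℕ → ℝ) (r : ℕ)
    (β : H) (ρ : ℝ) (hρ : 0 < ρ)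
    (hpos : ∀ j, 0 < lam j)
    (X : ℕ → Ω → H) (eps : ℕ → Ω → ℝ) (y : ℕ → Ω → ℝ)
    (hy : ∀ i ω, y i ω = ⟪X i ω, β⟫ + eps i ω)
    -- i.i.d. sequence
    (hmeas : ∀ i, Measurable fun ω => (X i ω, eps i ω))
    (hiid : ∀ i, Measure.map (fun ω => (X i ω, eps i ω)) μ
        = Measure.map (fun ω => (X 0 ω, eps 0 ω)) μ)
    (hindep : iIndepFun
        (fun i ω => (X i ω, eps i ω)) μ)
    -- noise: centered, variance σ², independent of the covariate
    (heps0 : ∀ i, ∫ ω, eps i ω ∂μ = 0)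
    (hepsInd : ∀ i, IndepFun (eps i) (X i) μ)
    -- scores: independent across j, centered, variance lam j, finite 4th moments
    (hscoreIndep : ∀ i, iIndepFun
        (fun j ω => ⟪X i ω, e j⟫) μ)
    (hscore0 : ∀ i j, ∫ ω, ⟪X i ω, e j⟫ ∂μ = 0)
    (hscoreV : ∀ i j, ∫ ω, (⟪X i ω, e j⟫) ^ 2 ∂μ = lam j)
    (hX4 : ∀ i, Integrable (fun ω => ‖X i ω‖ ^ 4) μ)
    -- the estimators at sample size n
    (Chat TR HR : ℕ → Ω → H)
    (hChat : ∀ n ω, Chat n ω = (n : ℝ)⁻¹ • ∑ i ∈ Finset.range n, y i ω • X i ω)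
    (hTR : ∀ n ω, TR n ω = ∑' j, ((lam j + ρ)⁻¹ * ⟪Chat n ω, e j⟫) • e j)
    (hHR : ∀ n ω, HR n ω =
      (∑ j ∈ Finset.range r, ((lam j)⁻¹ * ⟪Chat n ω, e j⟫) • e j)
        + ∑' j : ℕ, ((lam (r + j) + ρ)⁻¹ * ⟪Chat n ω, e (r + j)⟫) • e (r + j))
    (hTRint : ∀ n, Integrable (fun ω => ‖TR n ω - β‖ ^ 2) μ)
    (hHRint : ∀ n, Integrable (fun ω => ‖HR n ω - β‖ ^ 2) μ)
    -- at least one leading coefficient of β is non-zero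
    (hβ : ∃ j, j < r ∧ ⟪β, e j⟫ ≠ 0) :
    ∃ N : ℕ, ∀ n, N ≤ n →
      (∫ ω, ‖HR n ω - β‖ ^ 2 ∂μ) < ∫ ω, ‖TR n ω - β‖ ^ 2 ∂μ := by
  obtain ⟨j₀, hj₀, hβj₀⟩ := hβ
  have hTR' : TR = fun n ω => tikhonov e lam ρ (Chat n ω) := funext fun n => funext (hTR n)
  have hHR' : HR = fun n ω => hybrid e lam ρ r (Chat n ω) := funext fun n => funext (hHR n)
  subst hTR' hHR'
  let g : ℕ → H × ℝ → ℝ := fun j p => (⟪p.1, β⟫ + p.2) * ⟪p.1, e j⟫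
  have hg : ∀ j, Measurable (g j) := fun j => by fun_prop
  let Z : ℕ → ℕ → Ω → ℝ := fun j i ω => g j (X i ω, eps i ω)
  have hZ : ∀ n ω j, ⟪Chat n ω, e j⟫ = sampleMean (Z j) n ω := fun n ω j => by
    simp only [hChat, real_inner_smul_left, sum_inner, sampleMean, Z, g, hy]
  have hid : ∀ j i, IdentDistrib (Z j i) (Z j 0) μ μ := fun j i =>
    IdentDistrib.comp ⟨(hmeas i).aemeasurable, (hmeas 0).aemeasurable, hiid i⟩ (hg j)
  have hind : ∀ j, Pairwise fun i k => Z j i ⟂ᵢ[μ] Z j k := fun j i k hik =>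
    (hindep.comp (fun _ => g j) fun _ => hg j).indepFun hik
  -- No moment of the noise is assumed: the summands are square-integrable because the
  -- Tikhonov MSE at `n = 1` is finite.
  have hL2 : ∀ j, MemLp (Z j 0) 2 μ := fun j => by
    have hZ1 : (fun ω => ⟪Chat 1 ω, e j⟫) = Z j 0 := funext fun ω => by simp [hZ, sampleMean]
    rw [← hZ1]
    refine memLp_inner_of_integrable_sq_err_tikhonov e hρ (fun j => (hpos j).le) (hTRint 1) j ?_
    rw [hZ1]
    exact ((hg j).comp (hmeas 0)).aestronglyMeasurable
  have hX : Measurable (X 0) := measurable_fst.comp (hmeas 0)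
  have hX2 := integrable_sq_of_integrable_pow_four hX.norm.aestronglyMeasurable (hX4 0)
  have hmean : ∀ j, ∫ ω, Z j 0 ω ∂μ = lam j * ⟪β, e j⟫ := fun j =>
    integral_inner_add_mul_inner_of_indep e hX hX2 (fun k l hkl => (hscoreIndep 0).indepFun hkl)
      (hscore0 0) (hscoreV 0) (measurable_snd.comp (hmeas 0)) (heps0 0) (hepsInd 0) β j
      ((hL2 j).integrable one_le_two)
  have hK : 0 < ∑ j ∈ Finset.range r, (ρ * ⟪β, e j⟫ / (lam j + ρ)) ^ 2 :=
    Finset.sum_pos' (fun j _ => sq_nonneg _) ⟨j₀, Finset.mem_range.mpr hj₀,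
      by have := hpos j₀; positivity⟩
  obtain ⟨N, hN⟩ := exists_forall_ge_pos_add_div hK
    (∑ j ∈ Finset.range r, (((lam j + ρ)⁻¹) ^ 2 - ((lam j)⁻¹) ^ 2) * Var[Z j 0; μ])
  refine ⟨max N 1, fun n hn => ?_⟩
  have hmse := integral_sq_err_tikhonov_sub_hybrid e hρ hpos r β hind hid hL2 hmean
    (by omega : n ≠ 0) (hZ n) (hTRint n) (hHRint n)
  linarith [hN n (le_of_max_le_left hn)]

/-- for fixed `ρ > 0`, if some `⟪β, φ_{j1}⟫ ≠ 0` (`j < r`), then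
the oracle Tikhonov estimator has strictly larger MSE than the oracle hybrid
estimator for all sufficiently large sample sizes `n`. -/
theorem stmt16 {Ω H : Type*} [MeasurableSpace Ω]
    [NormedAddCommGroup H] [InnerProductSpace ℝ H] [CompleteSpace H]
    [MeasurableSpace H] [BorelSpace H]
    (μ : Measure Ω) [IsProbabilityMeasure μ]
    (e : HilbertBasis ℕ ℝ H) (lam : ℕ → ℝ) (r : ℕ) (hr : 0 < r)
    (β : H) (ρ σ2 : ℝ) (hρ : 0 < ρ)
    (hpos : ∀ j, 0 < lam j) (hsum : Summable lam)
    (X : ℕ → Ω → H) (eps : ℕ → Ω → ℝ) (y : ℕ → Ω → ℝ)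
    (hy : ∀ i ω, y i ω = ⟪X i ω, β⟫ + eps i ω)
    -- i.i.d. sequence
    (hmeas : ∀ i, Measurable fun ω => (X i ω, eps i ω))
    (hiid : ∀ i, Measure.map (fun ω => (X i ω, eps i ω)) μ
        = Measure.map (fun ω => (X 0 ω, eps 0 ω)) μ)
    (hindep : iIndepFun
        (fun i ω => (X i ω, eps i ω)) μ)
    -- noise: centered, variance σ², independent of the covariate
    (heps0 : ∀ i, ∫ ω, eps i ω ∂μ = 0)
    (hepsV : ∀ i, ∫ ω, (eps i ω) ^ 2 ∂μ = σ2)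
    (hepsInd : ∀ i, IndepFun (eps i) (X i) μ)
    -- scores: independent across j, centered, variance lam j, finite 4th moments
    (hscoreIndep : ∀ i, iIndepFun
        (fun j ω => ⟪X i ω, e j⟫) μ)
    (hscore0 : ∀ i j, ∫ ω, ⟪X i ω, e j⟫ ∂μ = 0)
    (hscoreV : ∀ i j, ∫ ω, (⟪X i ω, e j⟫) ^ 2 ∂μ = lam j)
    (hscore4 : ∀ i j, Integrable (fun ω => (⟪X i ω, e j⟫) ^ 4) μ)
    (hX4 : ∀ i, Integrable (fun ω => ‖X i ω‖ ^ 4) μ)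
    -- the estimators at sample size n
    (Chat TR HR : ℕ → Ω → H)
    (hChat : ∀ n ω, Chat n ω = (n : ℝ)⁻¹ • ∑ i ∈ Finset.range n, y i ω • X i ω)
    (hTR : ∀ n ω, TR n ω = ∑' j, ((lam j + ρ)⁻¹ * ⟪Chat n ω, e j⟫) • e j)
    (hHR : ∀ n ω, HR n ω =
      (∑ j ∈ Finset.range r, ((lam j)⁻¹ * ⟪Chat n ω, e j⟫) • e j)
        + ∑' j : ℕ, ((lam (r + j) + ρ)⁻¹ * ⟪Chat n ω, e (r + j)⟫) • e (r + j))
    (hTRint : ∀ n, Integrable (fun ω => ‖TR n ω - β‖ ^ 2) μ)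
    (hHRint : ∀ n, Integrable (fun ω => ‖HR n ω - β‖ ^ 2) μ)
    -- at least one leading coefficient of β is non-zero
    (hβ : ∃ j, j < r ∧ ⟪β, e j⟫ ≠ 0) :
    ∃ N : ℕ, ∀ n, N ≤ n →
      (∫ ω, ‖HR n ω - β‖ ^ 2 ∂μ) < ∫ ω, ‖TR n ω - β‖ ^ 2 ∂μ :=
  stmt16_general μ e lam r β ρ hρ hpos X eps y hy hmeas hiid hindep heps0 hepsInd hscoreIndep
    hscore0 hscoreV hX4 Chat TR HR hChat hTR hHR hTRint hHRint hβ
end
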